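/- arXiv:2112.03079 — 3 statements merged into one kernel-verified Lean document; each statement's English description precedes it below -/
import Mathlib

section
/- Let 1 ≤ p < q ≤ ∞ and f ∈ L^p(ℝ³). Then lim_{t→0⁺} t^{(3/2)(1/p − 1/q)} ‖G(·,t) ∗ f‖_{L^q(ℝ³)} = 0. In particular, for p = 3 and q = 6, lim_{t→0⁺} t^{1/4} ‖G(·,t) ∗ f‖_{L^6(ℝ³)} = 0. -/
open MeasureTheory Real Set Filter
open scoped ENNReal Topology

noncomputable section

/-- Euclidean space `ℝ³`. -/
abbrev E3 := EuclideanSpace ℝ (Fin 3)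

/-- The heat kernel on `ℝ³`. -/
def heatKernel (t : ℝ) (x : E3) : ℝ :=
  (4 * Real.pi * t) ^ (-(3:ℝ)/2) * Real.exp (-‖x‖^2 / (4*t))

/-!
Write `α = (3/2)(1/p - 1/q)` and let `r` be the Young exponent, `1/p + 1/r = 1 + 1/q`, so that
also `α = (3/2)(1 - 1/r)`. Interpolating between `‖G(·,t)‖_1 = 1` and
`‖G(·,t)‖_∞ = (4πt)^(-3/2)` gives `‖G(·,t)‖_r ≤ (4πt)^(-α)`, hence by Young's inequality
`t^α ‖G(·,t) ∗ h‖_q ≤ (4π)^(-α) ‖h‖_p` uniformly in `t`. Split `f = g + (f - g)` with `g`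
continuous and compactly supported and `‖f - g‖_p` small: the second part contributes little
uniformly in `t`, while `t^α ‖G(·,t) ∗ g‖_q ≤ t^α ‖g‖_q → 0`.
-/

theorem ENNReal.lintegral_rpow_mul_rpow_mul_rpow_le {α : Type*} [MeasurableSpace α]
    {μ : Measure α} {f g h : α → ℝ≥0∞} (hf : AEMeasurable f μ) (hg : AEMeasurable g μ)
    (hh : AEMeasurable h μ) {a b c : ℝ} (ha : 0 ≤ a) (hb : 0 ≤ b) (hc : 0 ≤ c)
    (habc : a + b + c = 1) :
    ∫⁻ x, f x ^ a * g x ^ b * h x ^ c ∂μ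
      ≤ (∫⁻ x, f x ∂μ) ^ a * (∫⁻ x, g x ∂μ) ^ b * (∫⁻ x, h x ∂μ) ^ c := by
  have := ENNReal.lintegral_prod_norm_pow_le (μ := μ) Finset.univ (f := ![f, g, h])
    (p := ![a, b, c]) (fun i _ => by fin_cases i <;> assumption)
    (by simpa [Fin.sum_univ_three] using habc) (fun i _ => by fin_cases i <;> assumption)
  simpa [Fin.prod_univ_three, mul_assoc] using this

theorem ENNReal.mul_eq_rpow_mul_rpow_mul_rpow (a b : ℝ≥0∞) {p q r : ℝ} (hp : 1 ≤ p) (hr : 1 ≤ r)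
    (hq : 0 < q) (hpqr : p⁻¹ + r⁻¹ = 1 + q⁻¹) :
    a * b = (a ^ r * b ^ p) ^ q⁻¹ * (a ^ r) ^ (1 - p⁻¹) * (b ^ p) ^ (1 - r⁻¹) := by
  have hp0 : 0 < p := one_pos.trans_le hp
  have hr0 : 0 < r := one_pos.trans_le hr
  have hp1 : p⁻¹ ≤ 1 := inv_le_one_of_one_le₀ hp
  have hr1 : r⁻¹ ≤ 1 := inv_le_one_of_one_le₀ hr
  have ha : a ^ (r * q⁻¹) * a ^ (r * (1 - p⁻¹)) = a := by
    rw [← ENNReal.rpow_add_of_nonneg _ _ (by positivity) (mul_nonneg hr0.le (by linarith)),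
      show r * q⁻¹ + r * (1 - p⁻¹) = 1 by field_simp at hpqr ⊢; linarith, ENNReal.rpow_one]
  have hb : b ^ (p * q⁻¹) * b ^ (p * (1 - r⁻¹)) = b := by
    rw [← ENNReal.rpow_add_of_nonneg _ _ (by positivity) (mul_nonneg hp0.le (by linarith)),
      show p * q⁻¹ + p * (1 - r⁻¹) = 1 by field_simp at hpqr ⊢; linarith, ENNReal.rpow_one]
  rw [ENNReal.mul_rpow_of_nonneg _ _ (by positivity), ← ENNReal.rpow_mul, ← ENNReal.rpow_mul,
    ← ENNReal.rpow_mul, ← ENNReal.rpow_mul]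
  calc a * b = (a ^ (r * q⁻¹) * a ^ (r * (1 - p⁻¹))) * (b ^ (p * q⁻¹) * b ^ (p * (1 - r⁻¹))) := by
        rw [ha, hb]
    _ = _ := by ring

theorem ENNReal.le_of_inv_add_inv_eq {p q r : ℝ≥0∞} (hr : 1 ≤ r) (h : p⁻¹ + r⁻¹ = 1 + q⁻¹) :
    p ≤ q := by
  refine ENNReal.inv_le_inv.1 (ENNReal.le_of_add_le_add_left ENNReal.one_ne_top ?_)
  rw [← h, add_comm]
  gcongr
  exact ENNReal.inv_le_one.2 hr

theorem ENNReal.exists_inv_add_inv_eq {p q : ℝ≥0∞} (hp : 1 ≤ p) (hpq : p ≤ q) :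
    ∃ r, 1 ≤ r ∧ p⁻¹ + r⁻¹ = 1 + q⁻¹ ∧ 1 - r⁻¹.toReal = p⁻¹.toReal - q⁻¹.toReal := by
  have hq0 : q ≠ 0 := (zero_lt_one.trans_le (hp.trans hpq)).ne'
  have hp1 : p⁻¹ ≤ 1 := ENNReal.inv_le_one.2 hp
  have hpq' : p⁻¹ ≤ 1 + q⁻¹ := hp1.trans le_self_add
  refine ⟨(1 + q⁻¹ - p⁻¹)⁻¹, ?_, ?_, ?_⟩
  · exact ENNReal.one_le_inv.2 (tsub_le_iff_right.2 (by gcongr))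
  · rw [inv_inv, add_tsub_cancel_of_le hpq']
  · rw [inv_inv, ENNReal.toReal_sub_of_le hpq' (by simp [hq0]),
      ENNReal.toReal_add (by simp) (by simp [hq0]), ENNReal.toReal_one]
    ring

theorem ENNReal.tendsto_nhds_zero_of_forall_eventually_le_add {ι : Type*} {l : Filter ι}
    {a : ι → ℝ≥0∞}
    (h : ∀ ε > 0, ∃ b : ι → ℝ≥0∞, Tendsto b l (𝓝 0) ∧ ∀ᶠ i in l, a i ≤ b i + ε) :
    Tendsto a l (𝓝 0) := by
  refine ENNReal.tendsto_nhds_zero.2 fun ε hε => ?_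
  obtain ⟨b, hb, hab⟩ := h (ε / 2) (ENNReal.half_pos hε.ne')
  filter_upwards [ENNReal.tendsto_nhds_zero.1 hb (ε / 2) (ENNReal.half_pos hε.ne'), hab]
    with i hbi hai
  calc a i ≤ b i + ε / 2 := hai
    _ ≤ ε / 2 + ε / 2 := by gcongr
    _ = ε := ENNReal.add_halves ε

theorem ENNReal.tendsto_ofReal_rpow_nhdsGT_zero {α : ℝ} (hα : 0 < α) :
    Tendsto (fun t : ℝ => ENNReal.ofReal (t ^ α)) (𝓝[>] 0) (𝓝 0) := by
  have h := (Real.continuousAt_rpow_const 0 α (Or.inr hα.le)).tendsto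
  rw [Real.zero_rpow hα.ne'] at h
  simpa [Function.comp_def] using
    (ENNReal.continuous_ofReal.tendsto 0).comp (h.mono_left nhdsWithin_le_nhds)

namespace MeasureTheory

theorem eLpNorm_le_eLpNorm_top_rpow_mul_eLpNorm_one_rpow {α E : Type*} [MeasurableSpace α]
    {μ : Measure α} [NormedAddCommGroup E] {f : α → E} (hf : AEStronglyMeasurable f μ)
    {p : ℝ≥0∞} (hp : 1 ≤ p) :
    eLpNorm f p μ ≤ eLpNorm f ∞ μ ^ (1 - p⁻¹.toReal) * eLpNorm f 1 μ ^ p⁻¹.toReal := by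
  rcases eq_or_ne p ∞ with rfl | hpt
  · simp
  have hp0 : p ≠ 0 := (one_pos.trans_le hp).ne'
  have hpr : 1 ≤ p.toReal := by simpa using ENNReal.toReal_mono hpt hp
  set N := eLpNorm f ∞ μ
  have hpoint : ∀ᵐ x ∂μ, ‖f x‖ₑ ^ p.toReal ≤ N ^ (p.toReal - 1) * ‖f x‖ₑ := by
    filter_upwards [enorm_ae_le_eLpNormEssSup f μ] with x hx
    calc ‖f x‖ₑ ^ p.toReal = ‖f x‖ₑ ^ (p.toReal - 1) * ‖f x‖ₑ := by
          conv_lhs => rw [← sub_add_cancel p.toReal 1]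
          rw [ENNReal.rpow_add_of_nonneg _ _ (by linarith) zero_le_one, ENNReal.rpow_one]
      _ ≤ N ^ (p.toReal - 1) * ‖f x‖ₑ := by gcongr; exact hx
  rw [eLpNorm_eq_lintegral_rpow_enorm_toReal hp0 hpt, eLpNorm_one_eq_lintegral_enorm,
    ENNReal.toReal_inv]
  calc (∫⁻ x, ‖f x‖ₑ ^ p.toReal ∂μ) ^ (1 / p.toReal)
      ≤ (N ^ (p.toReal - 1) * ∫⁻ x, ‖f x‖ₑ ∂μ) ^ (1 / p.toReal) := by
        rw [← lintegral_const_mul'' _ hf.enorm]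
        gcongr ?_ ^ _
        exact lintegral_mono_ae hpoint
    _ = N ^ (1 - p.toReal⁻¹) * (∫⁻ x, ‖f x‖ₑ ∂μ) ^ p.toReal⁻¹ := by
        rw [ENNReal.mul_rpow_of_nonneg _ _ (by positivity), ← ENNReal.rpow_mul, one_div]
        congr 2
        field_simp

section Young

variable {G : Type*} [MeasurableSpace G] [AddGroup G] [MeasurableAdd₂ G] [MeasurableNeg G]
  {μ : Measure G} [μ.IsAddLeftInvariant]

theorem measurePreserving_neg_add [μ.IsNegInvariant] (x : G) :
    MeasurePreserving (fun y => -y + x) μ μ := by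
  simpa [neg_add_rev] using Measure.measurePreserving_add_right_neg μ (-x)

theorem lintegral_neg_add_eq_self [μ.IsNegInvariant] (f : G → ℝ≥0∞) (x : G) :
    ∫⁻ y, f (-y + x) ∂μ = ∫⁻ y, f y ∂μ := by
  have h := lintegral_add_left_eq_self (μ := μ) (fun z => f (-z)) (-x)
  simp only [neg_add_rev, neg_neg] at h
  rw [h, lintegral_neg_eq_self]

theorem lconvolution_add [μ.IsNegInvariant] {k f g : G → ℝ≥0∞} (hk : AEMeasurable k μ)
    (hf : AEMeasurable f μ) : k ⋆ₗ[μ] (f + g) = k ⋆ₗ[μ] f + k ⋆ₗ[μ] g := by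
  ext x
  have hfx : AEMeasurable (fun y => f (-y + x)) μ :=
    hf.comp_quasiMeasurePreserving (measurePreserving_neg_add x).quasiMeasurePreserving
  simp only [lconvolution_def, Pi.add_apply, mul_add]
  exact lintegral_add_left' (hk.mul hfx) _

theorem lconvolution_enorm_le_eLpNorm_mul_eLpNorm [μ.IsNegInvariant] {E E' : Type*}
    [NormedAddCommGroup E] [NormedAddCommGroup E'] {f : G → E} {g : G → E'}
    (hf : AEStronglyMeasurable f μ) (hg : AEStronglyMeasurable g μ) {p r : ℝ≥0∞}
    (hpr : p⁻¹ + r⁻¹ = 1) (x : G) :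
    ((‖f ·‖ₑ) ⋆ₗ[μ] (‖g ·‖ₑ)) x ≤ eLpNorm f r μ * eLpNorm g p μ := by
  have : r.HolderTriple p 1 := ⟨by simpa [add_comm] using hpr⟩
  have hgx := measurePreserving_neg_add (μ := μ) x
  calc ((‖f ·‖ₑ) ⋆ₗ[μ] (‖g ·‖ₑ)) x = eLpNorm (fun y => ‖f y‖ * ‖g (-y + x)‖) 1 μ := by
        simp [lconvolution_def, eLpNorm_one_eq_lintegral_enorm, enorm_mul]
    _ ≤ 1 * eLpNorm f r μ * eLpNorm (g ∘ fun y => -y + x) p μ :=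
        eLpNorm_le_eLpNorm_mul_eLpNorm_of_nnnorm hf (hg.comp_measurePreserving hgx)
          (fun a b => ‖a‖ * ‖b‖) 1 (ae_of_all _ fun y => by simp)
    _ = eLpNorm f r μ * eLpNorm g p μ := by
        rw [one_mul, eLpNorm_comp_measurePreserving hg hgx]

variable [SFinite μ]

theorem lintegral_lconvolution {f g : G → ℝ≥0∞} (hf : AEMeasurable f μ) (hg : AEMeasurable g μ) :
    ∫⁻ x, (f ⋆ₗ[μ] g) x ∂μ = (∫⁻ x, f x ∂μ) * ∫⁻ x, g x ∂μ := by
  simp only [lconvolution_def]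
  rw [lintegral_lintegral_swap (by fun_prop)]
  have hg' (y : G) : ∫⁻ x, f y * g (-y + x) ∂μ = f y * ∫⁻ x, g x ∂μ := by
    have hgy : AEMeasurable (fun x => g (-y + x)) μ :=
      hg.comp_quasiMeasurePreserving (measurePreserving_add_left μ (-y)).quasiMeasurePreserving
    rw [lintegral_const_mul'' _ hgy, lintegral_add_left_eq_self g (-y)]
  simp_rw [hg']
  exact lintegral_mul_const'' _ hf

variable [μ.IsNegInvariant] {K F : G → ℝ≥0∞} {p q r : ℝ}

theorem lconvolution_le_rpow_mul_rpow_mul_rpow (hK : AEMeasurable K μ) (hF : AEMeasurable F μ)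
    (hp : 1 ≤ p) (hr : 1 ≤ r) (hq : 0 < q) (hpqr : p⁻¹ + r⁻¹ = 1 + q⁻¹) (x : G) :
    (K ⋆ₗ[μ] F) x ≤ ((K · ^ r) ⋆ₗ[μ] (F · ^ p)) x ^ q⁻¹
      * (∫⁻ y, K y ^ r ∂μ) ^ (1 - p⁻¹) * (∫⁻ y, F y ^ p ∂μ) ^ (1 - r⁻¹) := by
  have hFx : AEMeasurable (fun y => F (-y + x)) μ :=
    hF.comp_quasiMeasurePreserving (measurePreserving_neg_add x).quasiMeasurePreserving
  have hp1 : p⁻¹ ≤ 1 := inv_le_one_of_one_le₀ hp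
  have hr1 : r⁻¹ ≤ 1 := inv_le_one_of_one_le₀ hr
  simp_rw [lconvolution_def, ENNReal.mul_eq_rpow_mul_rpow_mul_rpow (K _) _ hp hr hq hpqr,
    ← lintegral_neg_add_eq_self (μ := μ) (F · ^ p) x]
  exact ENNReal.lintegral_rpow_mul_rpow_mul_rpow_le (by fun_prop) (by fun_prop) (by fun_prop)
    (by positivity) (by linarith) (by linarith) (by linarith)

theorem lintegral_lconvolution_rpow_le (hK : AEMeasurable K μ) (hF : AEMeasurable F μ)
    (hp : 1 ≤ p) (hr : 1 ≤ r) (hq : 0 < q) (hpqr : p⁻¹ + r⁻¹ = 1 + q⁻¹) :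
    ∫⁻ x, (K ⋆ₗ[μ] F) x ^ q ∂μ ≤ (∫⁻ y, K y ^ r ∂μ) ^ (q / r) * (∫⁻ y, F y ^ p ∂μ) ^ (q / p) := by
  set A := ∫⁻ y, K y ^ r ∂μ
  set B := ∫⁻ y, F y ^ p ∂μ
  have hp1 : p⁻¹ ≤ 1 := inv_le_one_of_one_le₀ hp
  have hr1 : r⁻¹ ≤ 1 := inv_le_one_of_one_le₀ hr
  have hpoint (x : G) : (K ⋆ₗ[μ] F) x ^ q
      ≤ ((K · ^ r) ⋆ₗ[μ] (F · ^ p)) x * (A ^ (q * (1 - p⁻¹)) * B ^ (q * (1 - r⁻¹))) := by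
    calc (K ⋆ₗ[μ] F) x ^ q
        ≤ (((K · ^ r) ⋆ₗ[μ] (F · ^ p)) x ^ q⁻¹ * A ^ (1 - p⁻¹) * B ^ (1 - r⁻¹)) ^ q :=
          ENNReal.rpow_le_rpow (lconvolution_le_rpow_mul_rpow_mul_rpow hK hF hp hr hq hpqr x) hq.le
      _ = _ := by
          rw [ENNReal.mul_rpow_of_nonneg _ _ hq.le, ENNReal.mul_rpow_of_nonneg _ _ hq.le,
            ← ENNReal.rpow_mul, ← ENNReal.rpow_mul, ← ENNReal.rpow_mul, inv_mul_cancel₀ hq.ne',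
            ENNReal.rpow_one, mul_comm (1 - p⁻¹), mul_comm (1 - r⁻¹), mul_assoc]
  calc ∫⁻ x, (K ⋆ₗ[μ] F) x ^ q ∂μ
      ≤ ∫⁻ x, ((K · ^ r) ⋆ₗ[μ] (F · ^ p)) x * (A ^ (q * (1 - p⁻¹)) * B ^ (q * (1 - r⁻¹))) ∂μ :=
        lintegral_mono hpoint
    _ = A * B * (A ^ (q * (1 - p⁻¹)) * B ^ (q * (1 - r⁻¹))) := by
        rw [lintegral_mul_const'' _ (aemeasurable_lconvolution (by fun_prop) (by fun_prop)),
          lintegral_lconvolution (by fun_prop) (by fun_prop)]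
    _ = A ^ (q / r) * B ^ (q / p) := by
        have hA : 1 + q * (1 - p⁻¹) = q / r := by field_simp at hpqr ⊢; linarith
        have hB : 1 + q * (1 - r⁻¹) = q / p := by field_simp at hpqr ⊢; linarith
        rw [← hA, ← hB, ENNReal.rpow_add_of_nonneg _ _ zero_le_one (by nlinarith),
          ENNReal.rpow_add_of_nonneg _ _ zero_le_one (by nlinarith), ENNReal.rpow_one,
          ENNReal.rpow_one]
        ring

theorem eLpNorm_lconvolution_enorm_le {E E' : Type*} [NormedAddCommGroup E]
    [NormedAddCommGroup E'] {f : G → E} {g : G → E'} (hf : AEStronglyMeasurable f μ) (hg : AEStronglyMeasurable g μ)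
    {p q r : ℝ≥0∞} (hp : 1 ≤ p) (hr : 1 ≤ r) (hpqr : p⁻¹ + r⁻¹ = 1 + q⁻¹) :
    eLpNorm ((‖f ·‖ₑ) ⋆ₗ[μ] (‖g ·‖ₑ)) q μ ≤ eLpNorm f r μ * eLpNorm g p μ := by
  rcases eq_or_ne q ∞ with rfl | hq
  · exact eLpNormEssSup_le_of_ae_enorm_bound
      (ae_of_all _ (lconvolution_enorm_le_eLpNorm_mul_eLpNorm hf hg (by simpa using hpqr)))
  have hp0 : p ≠ 0 := (one_pos.trans_le hp).ne'
  have hr0 : r ≠ 0 := (one_pos.trans_le hr).ne'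
  have hq0 : q ≠ 0 := by
    rintro rfl
    simp [hp0, hr0] at hpqr
  have hpq : p ≤ q := ENNReal.le_of_inv_add_inv_eq hr hpqr
  have hrq : r ≤ q := ENNReal.le_of_inv_add_inv_eq hp (by rwa [add_comm])
  have hpt : p ≠ ∞ := ne_top_of_le_ne_top hq hpq
  have hrt : r ≠ ∞ := ne_top_of_le_ne_top hq hrq
  have hpqr' : p.toReal⁻¹ + r.toReal⁻¹ = 1 + q.toReal⁻¹ := by
    have := congrArg ENNReal.toReal hpqr
    rwa [ENNReal.toReal_add (by simpa) (by simpa), ENNReal.toReal_add (by simp) (by simpa),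
      ENNReal.toReal_inv, ENNReal.toReal_inv, ENNReal.toReal_inv, ENNReal.toReal_one] at this
  have hq' : 0 < q.toReal := ENNReal.toReal_pos hq0 hq
  have key := lintegral_lconvolution_rpow_le (μ := μ) hf.enorm hg.enorm
    (by simpa using ENNReal.toReal_mono hpt hp) (by simpa using ENNReal.toReal_mono hrt hr)
    hq' hpqr'
  simp only [eLpNorm_eq_lintegral_rpow_enorm_toReal hq0 hq,
    eLpNorm_eq_lintegral_rpow_enorm_toReal hp0 hpt,
    eLpNorm_eq_lintegral_rpow_enorm_toReal hr0 hrt, enorm_eq_self]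
  calc _ ≤ (_ * _) ^ (1 / q.toReal) := ENNReal.rpow_le_rpow key (by positivity)
    _ = _ := by
        rw [ENNReal.mul_rpow_of_nonneg _ _ (by positivity), ← ENNReal.rpow_mul, ← ENNReal.rpow_mul]
        congr 2 <;> field_simp

end Young

theorem enorm_integral_mul_sub_le_lconvolution {G : Type*} [MeasurableSpace G] [AddCommGroup G]
    {μ : Measure G} (K f : G → ℝ) (x : G) :
    ‖∫ y, K y * f (x - y) ∂μ‖ₑ ≤ ((‖K ·‖ₑ) ⋆ₗ[μ] (‖f ·‖ₑ)) x := by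
  simpa only [lconvolution_def, enorm_mul, neg_add_eq_sub] using
    enorm_integral_le_lintegral_enorm (μ := μ) fun y => K y * f (x - y)

end MeasureTheory

theorem heatKernel_nonneg {t : ℝ} (ht : 0 < t) (x : E3) : 0 ≤ heatKernel t x := by
  unfold heatKernel; positivity

theorem heatKernel_le {t : ℝ} (ht : 0 < t) (x : E3) :
    heatKernel t x ≤ (4 * π * t) ^ (-(3:ℝ)/2) := by
  refine mul_le_of_le_one_right (by positivity) (Real.exp_le_one_iff.2 ?_)
  exact div_nonpos_of_nonpos_of_nonneg (neg_nonpos.2 (sq_nonneg _)) (by positivity)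

theorem continuous_heatKernel (t : ℝ) : Continuous (heatKernel t) := by
  unfold heatKernel; fun_prop

theorem integral_heatKernel {t : ℝ} (ht : 0 < t) : ∫ x, heatKernel t x = 1 := by
  have hb : 0 < (4 * t)⁻¹ := by positivity
  have h := GaussianFourier.integral_rexp_neg_mul_sq_norm (V := E3) hb
  simp only [finrank_euclideanSpace, Fintype.card_fin] at h
  have hexp (x : E3) : -‖x‖ ^ 2 / (4 * t) = -(4 * t)⁻¹ * ‖x‖ ^ 2 := by ring
  simp only [heatKernel, integral_const_mul, hexp, h, div_inv_eq_mul]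
  rw [show π * (4 * t) = 4 * π * t by ring, ← Real.rpow_add (by positivity)]
  norm_num

theorem eLpNorm_heatKernel_one {t : ℝ} (ht : 0 < t) : eLpNorm (heatKernel t) 1 volume = 1 := by
  have hint : Integrable (heatKernel t) := by
    apply Integrable.of_integral_ne_zero; rw [integral_heatKernel ht]; exact one_ne_zero
  rw [eLpNorm_one_eq_lintegral_enorm]
  simp_rw [Real.enorm_of_nonneg (heatKernel_nonneg ht _)]
  rw [← ofReal_integral_eq_lintegral_ofReal hint (ae_of_all _ (heatKernel_nonneg ht)),
    integral_heatKernel ht, ENNReal.ofReal_one]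

theorem eLpNorm_heatKernel_le {t : ℝ} (ht : 0 < t) {r : ℝ≥0∞} (hr : 1 ≤ r) :
    eLpNorm (heatKernel t) r volume
      ≤ ENNReal.ofReal ((4 * π * t) ^ (-(3 / 2) * (1 - r⁻¹.toReal))) := by
  have hs : r⁻¹.toReal ≤ 1 := by
    simpa using ENNReal.toReal_mono ENNReal.one_ne_top (ENNReal.inv_le_one.2 hr)
  have htop : eLpNorm (heatKernel t) ∞ volume ≤ ENNReal.ofReal ((4 * π * t) ^ (-(3:ℝ) / 2)) :=
    eLpNormEssSup_le_of_ae_bound (ae_of_all _ fun x => by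
      rw [Real.norm_of_nonneg (heatKernel_nonneg ht x)]; exact heatKernel_le ht x)
  calc eLpNorm (heatKernel t) r volume
      ≤ eLpNorm (heatKernel t) ∞ volume ^ (1 - r⁻¹.toReal)
          * eLpNorm (heatKernel t) 1 volume ^ r⁻¹.toReal :=
        eLpNorm_le_eLpNorm_top_rpow_mul_eLpNorm_one_rpow
          (continuous_heatKernel t).aestronglyMeasurable hr
    _ ≤ ENNReal.ofReal ((4 * π * t) ^ (-(3:ℝ) / 2)) ^ (1 - r⁻¹.toReal) := by
        rw [eLpNorm_heatKernel_one ht, ENNReal.one_rpow, mul_one]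
        gcongr
    _ = _ := by
        rw [ENNReal.ofReal_rpow_of_nonneg (by positivity) (by linarith),
          ← Real.rpow_mul (by positivity), neg_div]

theorem rpow_mul_eLpNorm_heatKernel_le {t : ℝ} (ht : 0 < t) {r : ℝ≥0∞} (hr : 1 ≤ r) :
    ENNReal.ofReal (t ^ ((3 / 2) * (1 - r⁻¹.toReal))) * eLpNorm (heatKernel t) r volume
      ≤ ENNReal.ofReal ((4 * π) ^ (-(3 / 2) * (1 - r⁻¹.toReal))) := by
  set α := (3 / 2) * (1 - r⁻¹.toReal)
  calc ENNReal.ofReal (t ^ α) * eLpNorm (heatKernel t) r volume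
      ≤ ENNReal.ofReal (t ^ α) * ENNReal.ofReal ((4 * π * t) ^ (-α)) := by
        gcongr
        simpa only [α, neg_mul] using eLpNorm_heatKernel_le ht hr
    _ = ENNReal.ofReal ((4 * π) ^ (-α)) := by
        rw [← ENNReal.ofReal_mul (by positivity), Real.mul_rpow (by positivity) ht.le,
          Real.rpow_neg ht.le, mul_left_comm, mul_inv_cancel₀ (by positivity), mul_one]
    _ = ENNReal.ofReal ((4 * π) ^ (-(3 / 2) * (1 - r⁻¹.toReal))) := by rw [neg_mul]

def heatSemigroup (t : ℝ) (f : E3 → ℝ) (x : E3) : ℝ :=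
  ∫ y, heatKernel t y * f (x - y)

theorem eLpNorm_heatSemigroup_le {t : ℝ} (ht : 0 < t) {f g : E3 → ℝ}
    (hf : AEStronglyMeasurable f) (hg : AEStronglyMeasurable g) {p q r : ℝ≥0∞} (hp : 1 ≤ p)
    (hr : 1 ≤ r) (hpqr : p⁻¹ + r⁻¹ = 1 + q⁻¹) :
    eLpNorm (heatSemigroup t f) q volume
      ≤ eLpNorm g q volume + eLpNorm (heatKernel t) r volume * eLpNorm (f - g) p volume := by
  have hq : 1 ≤ q := hp.trans (ENNReal.le_of_inv_add_inv_eq hr hpqr)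
  set K : E3 → ℝ≥0∞ := (‖heatKernel t ·‖ₑ)
  have hK : AEMeasurable K := (continuous_heatKernel t).enorm.aemeasurable
  have hpoint (x : E3) : ‖heatSemigroup t f x‖ₑ
      ≤ (K ⋆ₗ (‖g ·‖ₑ) + K ⋆ₗ (‖(f - g) ·‖ₑ)) x := by
    rw [← lconvolution_add hK hg.enorm]
    refine (enorm_integral_mul_sub_le_lconvolution _ _ x).trans (lintegral_mono fun y => ?_)
    gcongr
    simpa using enorm_add_le (g (-y + x)) ((f - g) (-y + x))
  calc eLpNorm (heatSemigroup t f) q volume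
      ≤ eLpNorm (K ⋆ₗ (‖g ·‖ₑ) + K ⋆ₗ (‖(f - g) ·‖ₑ)) q volume :=
        eLpNorm_mono_enorm fun x => (hpoint x).trans_eq (enorm_eq_self _).symm
    _ ≤ eLpNorm (K ⋆ₗ (‖g ·‖ₑ)) q volume + eLpNorm (K ⋆ₗ (‖(f - g) ·‖ₑ)) q volume :=
        eLpNorm_add_le (aemeasurable_lconvolution hK hg.enorm).aestronglyMeasurable
          (aemeasurable_lconvolution hK (hf.sub hg).enorm).aestronglyMeasurable hq
    _ ≤ eLpNorm (heatKernel t) 1 volume * eLpNorm g q volume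
          + eLpNorm (heatKernel t) r volume * eLpNorm (f - g) p volume := by
        gcongr
        · exact eLpNorm_lconvolution_enorm_le (continuous_heatKernel t).aestronglyMeasurable hg
            hq le_rfl (by simp [add_comm])
        · exact eLpNorm_lconvolution_enorm_le (continuous_heatKernel t).aestronglyMeasurable
            (hf.sub hg) hp hr hpqr
    _ = _ := by rw [eLpNorm_heatKernel_one ht, one_mul]

theorem tendsto_rpow_mul_eLpNorm_heatSemigroup {p q : ℝ≥0∞} (hp : 1 ≤ p) (hpq : p < q)
    {f : E3 → ℝ} (hf : MemLp f p volume) :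
    Tendsto (fun t : ℝ => ENNReal.ofReal (t ^ ((3 / 2) * (p⁻¹.toReal - q⁻¹.toReal)))
      * eLpNorm (heatSemigroup t f) q volume) (𝓝[>] 0) (𝓝 0) := by
  obtain ⟨r, hr, hpqr, hα⟩ := ENNReal.exists_inv_add_inv_eq hp hpq.le
  have hp0 : p ≠ 0 := (zero_lt_one.trans_le hp).ne'
  have hq0 : q ≠ 0 := (zero_lt_one.trans_le (hp.trans hpq.le)).ne'
  have hα0 : 0 < (3 / 2) * (1 - r⁻¹.toReal) := by
    rw [hα]
    refine mul_pos (by norm_num) (sub_pos.2 ((ENNReal.toReal_lt_toReal ?_ ?_).2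
      (ENNReal.inv_lt_inv.2 hpq))) <;> simp [hp0, hq0]
  rw [← hα]
  set α := (3 / 2) * (1 - r⁻¹.toReal)
  set C := ENNReal.ofReal ((4 * π) ^ (-(3 / 2) * (1 - r⁻¹.toReal)))
  refine ENNReal.tendsto_nhds_zero_of_forall_eventually_le_add fun ε hε => ?_
  obtain ⟨g, hg_supp, hfg, hg_cont, -⟩ := hf.exists_hasCompactSupport_eLpNorm_sub_le hpq.ne_top
    (ε := ε / C) (ENNReal.div_pos_iff.2 ⟨hε.ne', ENNReal.ofReal_ne_top⟩).ne'
  have hgq : eLpNorm g q volume ≠ ∞ :=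
    (hg_cont.memLp_of_hasCompactSupport hg_supp).eLpNorm_ne_top
  refine ⟨fun t => ENNReal.ofReal (t ^ α) * eLpNorm g q volume, ?_, ?_⟩
  · simpa using
      ENNReal.Tendsto.mul_const (ENNReal.tendsto_ofReal_rpow_nhdsGT_zero hα0) (Or.inr hgq)
  filter_upwards [self_mem_nhdsWithin] with t ht
  calc ENNReal.ofReal (t ^ α) * eLpNorm (heatSemigroup t f) q volume
      ≤ ENNReal.ofReal (t ^ α) * (eLpNorm g q volume
          + eLpNorm (heatKernel t) r volume * eLpNorm (f - g) p volume) := by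
        gcongr
        exact eLpNorm_heatSemigroup_le ht hf.1 hg_cont.aestronglyMeasurable hp hr hpqr
    _ = ENNReal.ofReal (t ^ α) * eLpNorm g q volume
          + ENNReal.ofReal (t ^ α) * eLpNorm (heatKernel t) r volume
            * eLpNorm (f - g) p volume := by
        ring
    _ ≤ ENNReal.ofReal (t ^ α) * eLpNorm g q volume + C * (ε / C) := by
        gcongr
        exact rpow_mul_eLpNorm_heatKernel_le ht hr
    _ ≤ ENNReal.ofReal (t ^ α) * eLpNorm g q volume + ε := by
        gcongr
        exact ENNReal.mul_div_le

theorem heat_semigroup_vanishing_at_zero :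
    (∀ p q : ℝ≥0∞, 1 ≤ p → p < q →
      ∀ f : E3 → ℝ, MemLp f p volume →
        Tendsto (fun t : ℝ =>
            ENNReal.ofReal (t ^ ((3/2) * (p⁻¹.toReal - q⁻¹.toReal))) *
              eLpNorm (fun x => ∫ y, heatKernel t y * f (x - y)) q volume)
          (𝓝[>] 0) (𝓝 0)) ∧
    (∀ f : E3 → ℝ, MemLp f 3 volume →
      Tendsto (fun t : ℝ =>
          ENNReal.ofReal (t ^ (1/4 : ℝ)) *
            eLpNorm (fun x => ∫ y, heatKernel t y * f (x - y)) 6 volume)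
        (𝓝[>] 0) (𝓝 0)) := by
  refine ⟨fun p q hp hpq f hf => tendsto_rpow_mul_eLpNorm_heatSemigroup hp hpq hf, fun f hf => ?_⟩
  have hexp : (3 / 2) * ((3 : ℝ≥0∞)⁻¹.toReal - (6 : ℝ≥0∞)⁻¹.toReal) = 1 / 4 := by
    rw [ENNReal.toReal_inv, ENNReal.toReal_inv]
    norm_num
  have h := tendsto_rpow_mul_eLpNorm_heatSemigroup (p := 3) (q := 6) (by norm_num) (by norm_num) hf
  rw [hexp] at h
  exact h
end
end

section
/- Let f and g be smooth (infinitely differentiable) real-valued functions on ℝ. Then for every integer k ≥ 1 and every t ∈ ℝ, ∂_t^k(t^k f(t) g(t)) = ∑_{j=0}^{k} C(k,j) ∂_t^j(t^j f(t)) · ∂_t^{k−j}(t^{k−j} g(t)) − k ∑_{j=0}^{k−1} C(k−1,j) ∂_t^j(t^j f(t)) · ∂_t^{k−1−j}(t^{k−1−j} g(t)), where C(k,j) denotes the binomial coefficient. -/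
open Finset

noncomputable section

/-- `DD h n = ∂^n (s^n h)`. -/
def DD (h : ℝ → ℝ) (n : ℕ) : ℝ → ℝ := iteratedDeriv n (fun s => s ^ n * h s)

lemma smoothTop_diff {h : ℝ → ℝ} (hh : ContDiff ℝ (⊤ : ℕ∞) h) : Differentiable ℝ h :=
  hh.differentiable (by simp)

lemma smooth_pow_mul {h : ℝ → ℝ} (hh : ContDiff ℝ (⊤ : ℕ∞) h) (n : ℕ) :
    ContDiff ℝ (⊤ : ℕ∞) (fun s : ℝ => s ^ n * h s) :=
  (contDiff_id.pow n).mul hh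

lemma iteratedDeriv_smooth {h : ℝ → ℝ} (hh : ContDiff ℝ (⊤ : ℕ∞) h) (n : ℕ) :
    ContDiff ℝ (⊤ : ℕ∞) (iteratedDeriv n h) := by
  rw [iteratedDeriv_eq_iterate]; exact hh.iterate_deriv n

lemma DD_smooth {h : ℝ → ℝ} (hh : ContDiff ℝ (⊤ : ℕ∞) h) (n : ℕ) :
    ContDiff ℝ (⊤ : ℕ∞) (DD h n) :=
  iteratedDeriv_smooth (smooth_pow_mul hh n) n

/-- Leibniz for multiplication by the identity. -/
lemma iteratedDeriv_id_mul {h : ℝ → ℝ} (hh : ContDiff ℝ (⊤ : ℕ∞) h) (n : ℕ) (t : ℝ) :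
    iteratedDeriv (n + 1) (fun s => s * h s) t =
      t * iteratedDeriv (n + 1) h t + (n + 1 : ℝ) * iteratedDeriv n h t := by
  induction n generalizing t with
  | zero =>
    rw [iteratedDeriv_one, iteratedDeriv_one, iteratedDeriv_zero]
    have := ((hasDerivAt_id' t).mul ((smoothTop_diff hh t).hasDerivAt)).deriv
    erw [this]; push_cast; ring
  | succ n ih =>
    rw [iteratedDeriv_succ]
    have hfun : iteratedDeriv (n + 1) (fun s => s * h s)
        = fun x => x * iteratedDeriv (n + 1) h x + (n + 1 : ℝ) * iteratedDeriv n h x :=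
      funext fun x => ih x
    rw [hfun]
    have h1 : HasDerivAt (iteratedDeriv (n + 1) h) (iteratedDeriv (n + 2) h t) t := by
      rw [iteratedDeriv_succ (n := n + 1)]
      exact (smoothTop_diff (iteratedDeriv_smooth hh (n + 1)) t).hasDerivAt
    have h2 : HasDerivAt (iteratedDeriv n h) (iteratedDeriv (n + 1) h t) t := by
      rw [iteratedDeriv_succ (n := n)]
      exact (smoothTop_diff (iteratedDeriv_smooth hh n) t).hasDerivAt
    have := (((hasDerivAt_id' t).mul h1).add (h2.const_mul ((n : ℝ) + 1))).deriv
    erw [this]; push_cast; ring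

/-- Recursion `DD h (k+1) = t (DD h k)' + (k+1) DD h k`. -/
lemma DD_rec {h : ℝ → ℝ} (hh : ContDiff ℝ (⊤ : ℕ∞) h) (k : ℕ) (t : ℝ) :
    DD h (k + 1) t = t * deriv (DD h k) t + (k + 1 : ℝ) * DD h k t := by
  have hfun : (fun s : ℝ => s ^ (k + 1) * h s) = fun s => s * (s ^ k * h s) := by
    funext s; ring
  have key := iteratedDeriv_id_mul (smooth_pow_mul hh k) k t
  rw [DD, hfun, key]
  simp only [DD, iteratedDeriv_succ]

lemma DD_deriv {h : ℝ → ℝ} (hh : ContDiff ℝ (⊤ : ℕ∞) h) (k : ℕ) (t : ℝ) :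
    t * deriv (DD h k) t = DD h (k + 1) t - (k + 1 : ℝ) * DD h k t := by
  rw [DD_rec hh k t]; ring

/-- `SS f g k t = ∑_{j=0}^k C(k,j) DD f j t · DD g (k-j) t`. -/
def SS (f g : ℝ → ℝ) (k : ℕ) : ℝ → ℝ :=
  fun t => ∑ j ∈ Finset.range (k + 1), (k.choose j : ℝ) * DD f j t * DD g (k - j) t

lemma SS_hasDerivAt {f g : ℝ → ℝ} (hf : ContDiff ℝ (⊤ : ℕ∞) f) (hg : ContDiff ℝ (⊤ : ℕ∞) g)
    (k : ℕ) (t : ℝ) :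
    HasDerivAt (SS f g k)
      (∑ j ∈ Finset.range (k + 1), (k.choose j : ℝ) *
        (deriv (DD f j) t * DD g (k - j) t + DD f j t * deriv (DD g (k - j)) t)) t := by
  apply HasDerivAt.fun_sum
  intro j _
  have hu : HasDerivAt (DD f j) (deriv (DD f j) t) t :=
    (smoothTop_diff (DD_smooth hf j) t).hasDerivAt
  have hv : HasDerivAt (DD g (k - j)) (deriv (DD g (k - j)) t) t :=
    (smoothTop_diff (DD_smooth hg (k - j)) t).hasDerivAt
  have := ((hu.const_mul ((k.choose j : ℝ))).fun_mul hv)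
  convert this using 1
  · rfl
  ring

/-- The key recursion for `SS`. -/
lemma SS_rec {f g : ℝ → ℝ} (hf : ContDiff ℝ (⊤ : ℕ∞) f) (hg : ContDiff ℝ (⊤ : ℕ∞) g)
    (k : ℕ) (t : ℝ) :
    SS f g (k + 1) t = t * deriv (SS f g k) t + (k + 2 : ℝ) * SS f g k t := by
  rw [(SS_hasDerivAt hf hg k t).deriv]
  rw [Finset.mul_sum]
  have step : ∀ j ∈ Finset.range (k + 1),
      t * ((k.choose j : ℝ) *
        (deriv (DD f j) t * DD g (k - j) t + DD f j t * deriv (DD g (k - j)) t))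
      = (k.choose j : ℝ) * DD f (j + 1) t * DD g (k - j) t
        + (k.choose j : ℝ) * DD f j t * DD g (k + 1 - j) t
        - (k + 2 : ℝ) * ((k.choose j : ℝ) * DD f j t * DD g (k - j) t) := by
    intro j hj
    have hjk : j ≤ k := Nat.lt_succ_iff.mp (Finset.mem_range.mp hj)
    have e1 : t * deriv (DD f j) t = DD f (j + 1) t - (j + 1 : ℝ) * DD f j t :=
      DD_deriv hf j t
    have e2 : t * deriv (DD g (k - j)) t
        = DD g (k - j + 1) t - ((k - j : ℕ) + 1 : ℝ) * DD g (k - j) t :=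
      DD_deriv hg (k - j) t
    have e3 : k - j + 1 = k + 1 - j := by omega
    have e4 : ((j : ℝ) + 1) + (((k - j : ℕ) : ℝ) + 1) = (k : ℝ) + 2 := by
      rw [Nat.cast_sub hjk]; ring
    calc t * ((k.choose j : ℝ) *
        (deriv (DD f j) t * DD g (k - j) t + DD f j t * deriv (DD g (k - j)) t))
        = (k.choose j : ℝ) * ((t * deriv (DD f j) t) * DD g (k - j) t
            + DD f j t * (t * deriv (DD g (k - j)) t)) := by ring
      _ = (k.choose j : ℝ) * ((DD f (j + 1) t - (j + 1 : ℝ) * DD f j t) * DD g (k - j) t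
            + DD f j t * (DD g (k + 1 - j) t - (((k - j : ℕ) : ℝ) + 1) * DD g (k - j) t)) := by
          rw [e1, e2, e3]
      _ = (k.choose j : ℝ) * DD f (j + 1) t * DD g (k - j) t
            + (k.choose j : ℝ) * DD f j t * DD g (k + 1 - j) t
            - (((j : ℝ) + 1) + (((k - j : ℕ) : ℝ) + 1))
              * ((k.choose j : ℝ) * DD f j t * DD g (k - j) t) := by ring
      _ = _ := by rw [e4]
  rw [Finset.sum_congr rfl step]
  rw [Finset.sum_sub_distrib, Finset.sum_add_distrib]
  have cancel : (k + 2 : ℝ) * SS f g k t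
      = ∑ j ∈ Finset.range (k + 1),
          (k + 2 : ℝ) * ((k.choose j : ℝ) * DD f j t * DD g (k - j) t) := by
    rw [SS, Finset.mul_sum]
  rw [← cancel]
  have e7 : (∑ j ∈ Finset.range (k + 1), (k.choose j : ℝ) * DD f j t * DD g (k + 1 - j) t)
      = (∑ j ∈ Finset.range k, (k.choose (j + 1) : ℝ) * DD f (j + 1) t * DD g (k - j) t)
        + (k.choose 0 : ℝ) * DD f 0 t * DD g (k + 1) t := by
    rw [Finset.sum_range_succ'
      (fun j => (k.choose j : ℝ) * DD f j t * DD g (k + 1 - j) t) k]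
    congr 1
    apply Finset.sum_congr rfl
    intro j _
    have : k + 1 - (j + 1) = k - j := by omega
    rw [this]
  have e8 : (∑ j ∈ Finset.range (k + 1), (k.choose (j + 1) : ℝ) * DD f (j + 1) t * DD g (k - j) t)
      = ∑ j ∈ Finset.range k, (k.choose (j + 1) : ℝ) * DD f (j + 1) t * DD g (k - j) t := by
    rw [Finset.sum_range_succ]
    simp [Nat.choose_succ_self]
  have pascal : SS f g (k + 1) t
      = (∑ j ∈ Finset.range (k + 1), (k.choose j : ℝ) * DD f (j + 1) t * DD g (k - j) t)
        + ∑ j ∈ Finset.range (k + 1), (k.choose j : ℝ) * DD f j t * DD g (k + 1 - j) t := by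
    rw [SS, Finset.sum_range_succ'
      (fun j => (((k + 1).choose j : ℝ)) * DD f j t * DD g (k + 1 - j) t) (k + 1)]
    have e6 : ∀ j ∈ Finset.range (k + 1),
        ((k + 1).choose (j + 1) : ℝ) * DD f (j + 1) t * DD g (k + 1 - (j + 1)) t
        = (k.choose j : ℝ) * DD f (j + 1) t * DD g (k - j) t
          + (k.choose (j + 1) : ℝ) * DD f (j + 1) t * DD g (k - j) t := by
      intro j _
      have : k + 1 - (j + 1) = k - j := by omega
      rw [this, Nat.choose_succ_succ]
      push_cast; ring
    rw [Finset.sum_congr rfl e6, Finset.sum_add_distrib, e7, e8]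
    simp only [Nat.choose_zero_right, Nat.cast_one, Nat.sub_zero]
    ring
  rw [pascal]
  ring

lemma SS_differentiable {f g : ℝ → ℝ} (hf : ContDiff ℝ (⊤ : ℕ∞) f)
    (hg : ContDiff ℝ (⊤ : ℕ∞) g) (k : ℕ) : Differentiable ℝ (SS f g k) :=
  fun t => ((SS_hasDerivAt hf hg k t)).differentiableAt

/-- Main lemma. -/
lemma main_lemma {f g : ℝ → ℝ} (hf : ContDiff ℝ (⊤ : ℕ∞) f) (hg : ContDiff ℝ (⊤ : ℕ∞) g)
    (m : ℕ) (t : ℝ) :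
    DD (fun s => f s * g s) (m + 1) t = SS f g (m + 1) t - (m + 1 : ℝ) * SS f g m t := by
  have hfg : ContDiff ℝ (⊤ : ℕ∞) (fun s => f s * g s) := hf.mul hg
  induction m generalizing t with
  | zero =>
    have key : ∀ (h : ℝ → ℝ), ContDiff ℝ (⊤ : ℕ∞) h → DD h 1 t = t * deriv h t + h t := by
      intro h hh
      have h0 : DD h 0 = h := by
        funext x; simp [DD]
      rw [DD_rec hh 0 t, h0]
      push_cast; ring
    rw [key _ hfg]
    have hd : deriv (fun s => f s * g s) t
        = deriv f t * g t + f t * deriv g t :=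
      (((smoothTop_diff hf t).hasDerivAt).mul ((smoothTop_diff hg t).hasDerivAt)).deriv
    rw [hd]
    have hDD0f : DD f 0 t = f t := by simp [DD]
    have hDD0g : DD g 0 t = g t := by simp [DD]
    have hDD1f : DD f 1 t = t * deriv f t + f t := key f hf
    have hDD1g : DD g 1 t = t * deriv g t + g t := key g hg
    simp only [SS]
    rw [show (0 : ℕ) + 1 = 1 from rfl]
    rw [Finset.sum_range_succ, Finset.sum_range_succ, Finset.sum_range_zero,
      Finset.sum_range_one]
    norm_num [hDD0f, hDD0g, hDD1f, hDD1g]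
    ring
  | succ m ih =>
    rw [DD_rec hfg (m + 1) t]
    have hfun : DD (fun s => f s * g s) (m + 1)
        = fun x => SS f g (m + 1) x - (m + 1 : ℝ) * SS f g m x :=
      funext fun x => ih x
    rw [hfun]
    have hd : deriv (fun x => SS f g (m + 1) x - (m + 1 : ℝ) * SS f g m x) t
        = deriv (SS f g (m + 1)) t - (m + 1 : ℝ) * deriv (SS f g m) t := by
      have h1 : HasDerivAt (SS f g (m + 1)) (deriv (SS f g (m + 1)) t) t :=
        (SS_differentiable hf hg (m + 1) t).hasDerivAt
      have h2 : HasDerivAt (SS f g m) (deriv (SS f g m) t) t :=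
        (SS_differentiable hf hg m t).hasDerivAt
      exact (h1.sub (h2.const_mul ((m : ℝ) + 1))).deriv
    rw [hd]
    beta_reduce
    have r1 : t * deriv (SS f g (m + 1)) t
        = SS f g (m + 2) t - (m + 3 : ℝ) * SS f g (m + 1) t := by
      have h := SS_rec hf hg (m + 1) t
      push_cast at h ⊢
      linarith [h]
    have r2 : t * deriv (SS f g m) t
        = SS f g (m + 1) t - (m + 2 : ℝ) * SS f g m t := by
      have h := SS_rec hf hg m t
      linarith [h]
    have expand : t * (deriv (SS f g (m + 1)) t - ((m : ℝ) + 1) * deriv (SS f g m) t)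
        = (t * deriv (SS f g (m + 1)) t) - ((m : ℝ) + 1) * (t * deriv (SS f g m) t) := by
      ring
    rw [expand, r1, r2]
    push_cast
    ring

theorem leibniz_type_identity_for_time_derivatives
    (f g : ℝ → ℝ) (hf : ContDiff ℝ (⊤ : ℕ∞) f) (hg : ContDiff ℝ (⊤ : ℕ∞) g)
    (k : ℕ) (hk : 1 ≤ k) (t : ℝ) :
    iteratedDeriv k (fun s => s ^ k * f s * g s) t =
      (∑ j ∈ Finset.range (k + 1), (k.choose j : ℝ) *
          iteratedDeriv j (fun s => s ^ j * f s) t *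
          iteratedDeriv (k - j) (fun s => s ^ (k - j) * g s) t)
        - (k : ℝ) * ∑ j ∈ Finset.range k, ((k - 1).choose j : ℝ) *
            iteratedDeriv j (fun s => s ^ j * f s) t *
            iteratedDeriv (k - 1 - j) (fun s => s ^ (k - 1 - j) * g s) t := by
  have hf' : ContDiff ℝ (⊤ : ℕ∞) f := hf.of_le (by simp)
  have hg' : ContDiff ℝ (⊤ : ℕ∞) g := hg.of_le (by simp)
  obtain ⟨m, rfl⟩ : ∃ m, k = m + 1 := ⟨k - 1, by omega⟩
  have hfun : (fun s : ℝ => s ^ (m + 1) * f s * g s)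
      = fun s => s ^ (m + 1) * (f s * g s) := by
    funext s; ring
  rw [hfun]
  have key := main_lemma hf' hg' m t
  rw [DD] at key
  rw [key]
  have e1 : (∑ j ∈ Finset.range (m + 1 + 1), ((m + 1).choose j : ℝ) *
        iteratedDeriv j (fun s => s ^ j * f s) t *
        iteratedDeriv (m + 1 - j) (fun s => s ^ (m + 1 - j) * g s) t)
      = SS f g (m + 1) t := rfl
  have e2 : (∑ j ∈ Finset.range (m + 1), ((m + 1 - 1).choose j : ℝ) *
        iteratedDeriv j (fun s => s ^ j * f s) t *
        iteratedDeriv (m + 1 - 1 - j) (fun s => s ^ (m + 1 - 1 - j) * g s) t)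
      = SS f g m t := by
    simp only [Nat.add_sub_cancel]; rfl
  rw [e1, e2]
  push_cast
  ring
end
end

section
/- Let E be a real normed vector space, T > 0, and let u : (0,T] → E be smooth (infinitely differentiable). Let μ ≥ 0, M > 0, 0 < δ < 1, b ∈ ℕ, and let k ≥ 1 be an integer. Assume that for every integer k̃ with 0 ≤ k̃ ≤ k, sup_{t∈(0,T]} t^μ ‖(d/dt)^{k̃}(t^{k̃} u(t))‖_E ≤ M^{b+k̃−δ} (b+k̃)^{b+k̃−1}, with the convention 0^{−1} = 1. Then sup_{t∈(0,T]} t^{μ+k} ‖u^{(k)}(t)‖_E ≤ (1 + 1/M)^k M^{b+k−δ} (b+k)^{b+k−1}. -/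
open Set

noncomputable section

/-- `n ^ e` for a natural base `n` and real exponent `e`, with the convention
`0 ^ e = 1` (in particular `0 ^ (-1) = 1`). -/
def npowR (n : ℕ) (e : ℝ) : ℝ := if n = 0 then 1 else (n : ℝ) ^ e

-- combinatorial part
def Aco (k j : ℕ) : ℕ := k.choose j * k.descFactorial (k - j)

lemma Aco_rec (k j : ℕ) : Aco (k+1) (j+1) = Aco k j + (k+j+2) * Aco k (j+1) := by
  unfold Aco
  rcases lt_or_ge j k with h | h
  · obtain ⟨m, rfl⟩ : ∃ m, k = j + m + 1 := ⟨k - j - 1, by omega⟩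
    have h1 : j + m + 1 + 1 - (j+1) = (j + m + 1 - j - 1) + 1 := by omega
    set k := j + m + 1 with hkk
    have h2 : k - j = (k - j - 1) + 1 := by omega
    rw [h1, Nat.succ_descFactorial_succ, Nat.choose_succ_succ]
    nth_rewrite 2 [h2]
    rw [Nat.descFactorial_succ]
    have h3 : k - (k - j - 1) = j + 1 := by omega
    rw [h3]
    have h5 : k - (j+1) = k - j - 1 := by omega
    rw [h5]
    have key : k.choose (j+1) * (j+1) = k.choose j * (k - j) := Nat.choose_succ_right_eq k j
    rw [h2] at key
    have hm : k - j - 1 = m := by omega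
    rw [hm] at key ⊢
    simp only [Nat.succ_eq_add_one]
    zify at key ⊢
    have hkz : (k:ℤ) = j + m + 1 := by omega
    linear_combination (-(k.descFactorial m : ℤ)) * key + ((k.choose j : ℤ) * (k.descFactorial m : ℤ)) * hkz
  · rcases eq_or_lt_of_le h with rfl | h'
    · simp [Nat.choose_succ_self, Nat.choose_self]
    · have : k.choose (j+1) = 0 := Nat.choose_eq_zero_of_lt (by omega)
      have h2 : (k+1).choose (j+1) = k.choose j := by
        rw [Nat.choose_succ_succ, this, Nat.add_zero]
      rw [h2, this]
      have : k - j = 0 := by omega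
      have h4 : k + 1 - (j + 1) = 0 := by omega
      simp [this, h4]

lemma Aco_zero_of_lt {k j : ℕ} (h : k < j) : Aco k j = 0 := by
  simp [Aco, Nat.choose_eq_zero_of_lt h]

noncomputable def cco (k j : ℕ) : ℝ := (-1 : ℝ)^(k-j) * (Aco k j : ℝ)

lemma cco_rec (k j : ℕ) (hj : j ≤ k) :
    cco (k+1) (j+1) = cco k j - ((k:ℝ)+j+2) * cco k (j+1) := by
  unfold cco
  rcases eq_or_lt_of_le hj with rfl | h
  · rw [Aco_zero_of_lt (Nat.lt_succ_self _)]
    simp [Aco_rec, Aco_zero_of_lt (Nat.lt_succ_self _)]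
  · have h1 : k + 1 - (j+1) = k - j := by omega
    have h2 : k - j = (k - (j+1)) + 1 := by omega
    rw [h1, Aco_rec k j, h2, pow_succ]
    push_cast
    ring

lemma cco_zero (k : ℕ) : cco (k+1) 0 = -((k:ℝ)+1) * cco k 0 := by
  unfold cco Aco
  simp only [Nat.choose_zero_right, Nat.sub_zero, Nat.descFactorial_self, pow_succ]
  push_cast [Nat.factorial_succ]
  ring

lemma abs_cco (k j : ℕ) : |cco k j| = (Aco k j : ℝ) := by
  unfold cco
  rw [abs_mul, abs_pow, abs_neg, abs_one, one_pow, one_mul, abs_of_nonneg (by positivity)]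

section Analytic
variable {E : Type*} [NormedAddCommGroup E] [NormedSpace ℝ E]

lemma eqon_iterderiv (f : ℝ → E) (n : ℕ) {t : ℝ} (ht : t ∈ Ioi (0:ℝ)) :
    iteratedDerivWithin n f (Ioi 0) t = iteratedDeriv n f t := by
  rw [iteratedDerivWithin_eq_iteratedFDerivWithin, iteratedDeriv_eq_iteratedFDeriv,
    iteratedFDerivWithin_of_isOpen n isOpen_Ioi ht]

lemma diffat_iter {f : ℝ → E} (hf : ContDiffOn ℝ (⊤ : ℕ∞) f (Ioi 0)) (m : ℕ) {t : ℝ} (ht : t ∈ Ioi (0:ℝ)) :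
    DifferentiableAt ℝ (iteratedDeriv m f) t := by
  have h1 : DifferentiableWithinAt ℝ (iteratedDerivWithin m f (Ioi 0)) (Ioi 0) t :=
    hf.differentiableOn_iteratedDerivWithin (by exact_mod_cast lt_top_iff_ne_top.2 (by simp))
      isOpen_Ioi.uniqueDiffOn t ht
  have h2 : DifferentiableWithinAt ℝ (iteratedDeriv m f) (Ioi 0) t :=
    h1.congr (fun x hx => (eqon_iterderiv f m hx).symm) (eqon_iterderiv f m ht).symm
  exact h2.differentiableAt (isOpen_Ioi.mem_nhds ht)

lemma deriv_on_open {f g : ℝ → E} (h : ∀ x ∈ Ioi (0:ℝ), f x = g x) {t : ℝ} (ht : t ∈ Ioi (0:ℝ)) :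
    deriv f t = deriv g t := by
  apply Filter.EventuallyEq.deriv_eq
  exact Filter.eventuallyEq_of_mem (isOpen_Ioi.mem_nhds ht) h

/-- Leibniz rule for a linear factor. -/
lemma linear_leibniz {v : ℝ → E} (hv : ContDiffOn ℝ (⊤ : ℕ∞) v (Ioi 0)) (n : ℕ) :
    ∀ t ∈ Ioi (0:ℝ), iteratedDeriv (n+1) (fun x => x • v x) t
      = t • iteratedDeriv (n+1) v t + ((n:ℝ)+1) • iteratedDeriv n v t := by
  induction n with
  | zero =>
    intro t ht
    rw [iteratedDeriv_one, iteratedDeriv_one, iteratedDeriv_zero]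
    rw [deriv_fun_smul differentiableAt_fun_id ((hv.differentiableOn (by simp)).differentiableAt
      (isOpen_Ioi.mem_nhds ht))]
    simp [add_comm]
  | succ n ih =>
    intro t ht
    rw [iteratedDeriv_succ]
    rw [deriv_on_open ih ht]
    have d1 : DifferentiableAt ℝ (iteratedDeriv (n+1) v) t := diffat_iter hv (n+1) ht
    have d2 : DifferentiableAt ℝ (iteratedDeriv n v) t := diffat_iter hv n ht
    rw [deriv_fun_add ((differentiableAt_fun_id.fun_smul d1)) (d2.fun_const_smul _)]
    rw [deriv_fun_smul differentiableAt_fun_id d1, deriv_fun_const_smul _ d2]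
    rw [← iteratedDeriv_succ, ← iteratedDeriv_succ]
    simp only [deriv_id'', one_smul]
    push_cast
    module

end Analytic

lemma cco_zero_of_lt {k j : ℕ} (h : k < j) : cco k j = 0 := by
  simp [cco, Aco_zero_of_lt h]

section Key
variable {E : Type*} [NormedAddCommGroup E] [NormedSpace ℝ E]

lemma smooth_w {u : ℝ → E} (hu : ContDiffOn ℝ (⊤ : ℕ∞) u (Ioi 0)) (j : ℕ) :
    ContDiffOn ℝ (⊤ : ℕ∞) (fun x : ℝ => x ^ j • u x) (Ioi 0) :=
  ((contDiff_id.pow j).contDiffOn).smul hu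

/-- `W u j = (d/dt)^j (t^j u)`. -/
noncomputable def Wfun (u : ℝ → E) (j : ℕ) : ℝ → E :=
  iteratedDeriv j (fun y => y ^ j • u y)

lemma key_identity {u : ℝ → E} (hu : ContDiffOn ℝ (⊤ : ℕ∞) u (Ioi 0)) (k : ℕ) :
    ∀ t ∈ Ioi (0:ℝ), (t^k : ℝ) • iteratedDeriv k u t
      = ∑ j ∈ Finset.range (k+1), cco k j • Wfun u j t := by
  induction k with
  | zero =>
    intro t ht
    simp [cco, Aco, Wfun, iteratedDeriv_zero]
  | succ k ih =>
    intro t ht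
    have hdW : ∀ j m : ℕ, DifferentiableAt ℝ (iteratedDeriv m (fun y : ℝ => y ^ j • u y)) t :=
      fun j m => diffat_iter (smooth_w hu j) m ht
    have hdWf : ∀ j : ℕ, DifferentiableAt ℝ (Wfun u j) t := fun j => hdW j j
    -- differentiate the inductive hypothesis
    have hderiv : deriv (fun x : ℝ => x^k • iteratedDeriv k u x) t
        = deriv (fun x : ℝ => ∑ j ∈ Finset.range (k+1), cco k j • Wfun u j x) t :=
      deriv_on_open (fun x hx => ih x hx) ht
    have hL : deriv (fun x : ℝ => x^k • iteratedDeriv k u x) t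
        = ((k:ℝ) * t^(k-1)) • iteratedDeriv k u t + t^k • iteratedDeriv (k+1) u t := by
      rw [deriv_fun_smul (differentiableAt_pow k) (diffat_iter hu k ht)]
      rw [deriv_pow_field, ← iteratedDeriv_succ]
      abel
    have hR : deriv (fun x : ℝ => ∑ j ∈ Finset.range (k+1), cco k j • Wfun u j x) t
        = ∑ j ∈ Finset.range (k+1), cco k j • deriv (Wfun u j) t := by
      rw [deriv_fun_sum (fun j _ => (hdWf j).fun_const_smul _)]
      exact Finset.sum_congr rfl (fun j _ => deriv_fun_const_smul _ (hdWf j))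
    -- Leibniz : t • deriv (W j) t  = W (j+1) t - (j+1) • W j t
    have hLb : ∀ j : ℕ, t • deriv (Wfun u j) t = Wfun u (j+1) t - ((j:ℝ)+1) • Wfun u j t := by
      intro j
      have e1 : (fun x : ℝ => x^(j+1) • u x) = fun x : ℝ => x • (x^j • u x) := by
        funext x; rw [pow_succ', mul_smul]
      have hlb := linear_leibniz (smooth_w hu j) j t ht
      have e3 : deriv (Wfun u j) t = iteratedDeriv (j+1) (fun x : ℝ => x^j • u x) t := by
        rw [iteratedDeriv_succ]; rfl
      have e4 : Wfun u (j+1) t = iteratedDeriv (j+1) (fun x : ℝ => x • (x^j • u x)) t := by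
        rw [Wfun, ← e1]
      rw [e3, e4, hlb]
      show _ = _ - ((j:ℝ)+1) • iteratedDeriv j (fun y : ℝ => y ^ j • u y) t
      abel
    -- multiply the differentiated identity by t
    have key1 : t^(k+1) • iteratedDeriv (k+1) u t
        = ∑ j ∈ Finset.range (k+1), cco k j • (t • deriv (Wfun u j) t)
          - ∑ j ∈ Finset.range (k+1), ((k:ℝ) * cco k j) • Wfun u j t := by
      have h1 : t • deriv (fun x : ℝ => x^k • iteratedDeriv k u x) t
          = t • deriv (fun x : ℝ => ∑ j ∈ Finset.range (k+1), cco k j • Wfun u j x) t := by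
        rw [hderiv]
      rw [hL, hR] at h1
      have hpow : ((k:ℝ) * t^(k-1)) * t = (k:ℝ) * t^k := by
        cases k with
        | zero => simp
        | succ m => rw [Nat.add_sub_cancel, mul_assoc, ← pow_succ]
      have h2 : t • (((k:ℝ) * t^(k-1)) • iteratedDeriv k u t + t^k • iteratedDeriv (k+1) u t)
          = ((k:ℝ) * t^k) • iteratedDeriv k u t + t^(k+1) • iteratedDeriv (k+1) u t := by
        rw [smul_add, smul_smul, smul_smul, mul_comm t, hpow, pow_succ, mul_comm (t^k) t]
      rw [h2] at h1
      have h3 : ((k:ℝ) * t^k) • iteratedDeriv k u t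
          = ∑ j ∈ Finset.range (k+1), ((k:ℝ) * cco k j) • Wfun u j t := by
        rw [mul_smul, ih t ht, Finset.smul_sum]
        exact Finset.sum_congr rfl (fun j _ => smul_smul _ _ _)
      have h4 : t • ∑ j ∈ Finset.range (k+1), cco k j • deriv (Wfun u j) t
          = ∑ j ∈ Finset.range (k+1), cco k j • (t • deriv (Wfun u j) t) := by
        rw [Finset.smul_sum]
        exact Finset.sum_congr rfl (fun j _ => smul_comm _ _ _)
      rw [h4] at h1
      rw [eq_sub_iff_add_eq, ← h1, h3]
      abel
    -- rewrite using Leibniz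
    have key2 : t^(k+1) • iteratedDeriv (k+1) u t
        = ∑ j ∈ Finset.range (k+1), cco k j • Wfun u (j+1) t
          - ∑ j ∈ Finset.range (k+1), (((j:ℝ)+1+(k:ℝ)) * cco k j) • Wfun u j t := by
      have e5 : ∀ j ∈ Finset.range (k+1), cco k j • (t • deriv (Wfun u j) t)
          = cco k j • Wfun u (j+1) t - (((j:ℝ)+1) * cco k j) • Wfun u j t := by
        intro j _
        rw [hLb j, smul_sub, smul_smul, mul_comm]
      rw [key1, Finset.sum_congr rfl e5, Finset.sum_sub_distrib, sub_sub,
        ← Finset.sum_add_distrib]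
      congr 1
      refine Finset.sum_congr rfl (fun j _ => ?_)
      rw [← add_smul]
      ring_nf
    -- reindex the sums
    conv_rhs => rw [Finset.sum_range_succ' (fun j => cco (k+1) j • Wfun u j t) (k+1)]
    rw [key2]
    have e6 : ∀ j ∈ Finset.range (k+1),
        cco (k+1) (j+1) • Wfun u (j+1) t
          = cco k j • Wfun u (j+1) t - (((k:ℝ)+j+2) * cco k (j+1)) • Wfun u (j+1) t := by
      intro j hj
      rw [cco_rec k j (Nat.lt_succ_iff.mp (Finset.mem_range.mp hj)), sub_smul]
    rw [Finset.sum_congr rfl e6, Finset.sum_sub_distrib, cco_zero k]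
    have e7 : ∑ j ∈ Finset.range (k+1), (((k:ℝ)+j+2) * cco k (j+1)) • Wfun u (j+1) t
          + (((k:ℝ)+1) * cco k 0) • Wfun u 0 t
        = ∑ j ∈ Finset.range (k+2), (((j:ℝ)+1+(k:ℝ)) * cco k j) • Wfun u j t := by
      rw [Finset.sum_range_succ' (fun j => (((j:ℝ)+1+(k:ℝ)) * cco k j) • Wfun u j t) (k+1)]
      congr 1
      · refine Finset.sum_congr rfl (fun j _ => ?_)
        congr 1
        push_cast; ring
      · congr 1
        push_cast; ring
    have e8 : ∑ j ∈ Finset.range (k+2), (((j:ℝ)+1+(k:ℝ)) * cco k j) • Wfun u j t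
        = ∑ j ∈ Finset.range (k+1), (((j:ℝ)+1+(k:ℝ)) * cco k j) • Wfun u j t := by
      rw [Finset.sum_range_succ, cco_zero_of_lt (Nat.lt_succ_self k)]
      simp
    rw [← e8, ← e7]
    rw [neg_mul, neg_smul]  -- handle (-(k+1) * cco k 0) • W 0
    abel
end Key

lemma nat_fact_le_pow (k : ℕ) (hk : 1 ≤ k) : Nat.factorial k ≤ k^(k-1) := by
  induction k with
  | zero => omega
  | succ n ih =>
    rcases Nat.eq_zero_or_pos n with rfl | hn
    · simp
    · have h1 := ih hn
      calc (n+1).factorial = (n+1) * n.factorial := rfl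
        _ ≤ (n+1) * n^(n-1) := Nat.mul_le_mul_left _ h1
        _ ≤ (n+1) * (n+1)^(n-1) := Nat.mul_le_mul_left _ (Nat.pow_le_pow_left (by omega) _)
        _ = (n+1)^(n-1+1) := (pow_succ' _ _).symm
        _ = (n+1)^(n+1-1) := by congr 1; omega

lemma termwise (b k j : ℕ) (hk : 1 ≤ k) (hj : j ≤ k) :
    (Aco k j : ℝ) * npowR (b + j) ((b:ℝ) + j - 1)
      ≤ (k.choose j : ℝ) * npowR (b + k) ((b:ℝ) + k - 1) := by
  have hbk : b + k ≠ 0 := by omega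
  have hnpk : npowR (b + k) ((b:ℝ) + k - 1) = ((b+k : ℕ) : ℝ)^((b+k-1 : ℕ)) := by
    rw [npowR, if_neg hbk]
    rw [show (b:ℝ) + k - 1 = ((b+k-1 : ℕ) : ℝ) by push_cast [Nat.cast_sub (by omega : 1 ≤ b + k)]; push_cast; ring]
    rw [Real.rpow_natCast]
  have hdesc : (Aco k j : ℝ) = (k.choose j : ℝ) * (k.descFactorial (k-j) : ℝ) := by
    rw [Aco]; push_cast; ring
  rw [hdesc, hnpk, mul_assoc]
  have hch : (0:ℝ) ≤ (k.choose j : ℝ) := by positivity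
  refine mul_le_mul_of_nonneg_left ?_ hch
  rcases Nat.eq_zero_or_pos (b + j) with hbj | hbj
  · -- b = 0, j = 0
    have hb : b = 0 := by omega
    have hj0 : j = 0 := by omega
    subst hb; subst hj0
    rw [npowR, if_pos rfl, mul_one]
    simp only [Nat.sub_zero, Nat.descFactorial_self, Nat.zero_add]
    exact_mod_cast nat_fact_le_pow k hk
  · have hnpj : npowR (b + j) ((b:ℝ) + j - 1) = ((b+j : ℕ) : ℝ)^((b+j-1 : ℕ)) := by
      rw [npowR, if_neg (by omega)]
      rw [show (b:ℝ) + j - 1 = ((b+j-1 : ℕ) : ℝ) by push_cast [Nat.cast_sub (by omega : 1 ≤ b + j)]; push_cast; ring]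
      rw [Real.rpow_natCast]
    rw [hnpj]
    have hnat : k.descFactorial (k-j) * (b+j)^(b+j-1) ≤ (b+k)^(b+k-1) := by
      calc k.descFactorial (k-j) * (b+j)^(b+j-1)
          ≤ k^(k-j) * (b+j)^(b+j-1) :=
            Nat.mul_le_mul_right _ (Nat.descFactorial_le_pow _ _)
        _ ≤ (b+k)^(k-j) * (b+k)^(b+j-1) :=
            Nat.mul_le_mul (Nat.pow_le_pow_left (by omega) _) (Nat.pow_le_pow_left (by omega) _)
        _ = (b+k)^((k-j) + (b+j-1)) := (pow_add _ _ _).symm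
        _ = (b+k)^(b+k-1) := by congr 1; omega
    exact_mod_cast hnat

theorem time_derivative_transfer_estimate
    {E : Type*} [NormedAddCommGroup E] [NormedSpace ℝ E]
    (T : ℝ) (hT : 0 < T) (u : ℝ → E) (hu : ContDiffOn ℝ (⊤ : ℕ∞) u (Set.Ioi 0))
    (μ M δ : ℝ) (hμ : 0 ≤ μ) (hM : 0 < M) (hδ0 : 0 < δ) (hδ1 : δ < 1)
    (b : ℕ) (k : ℕ) (hk : 1 ≤ k)
    (hyp : ∀ k' : ℕ, k' ≤ k → ∀ t ∈ Set.Ioc (0 : ℝ) T,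
        t ^ μ * ‖iteratedDerivWithin k' (fun s => s ^ k' • u s) (Set.Ioi 0) t‖
          ≤ M ^ ((b : ℝ) + k' - δ) * npowR (b + k') ((b : ℝ) + k' - 1)) :
    ∀ t ∈ Set.Ioc (0 : ℝ) T,
      t ^ (μ + k) * ‖iteratedDerivWithin k u (Set.Ioi 0) t‖
        ≤ (1 + 1/M) ^ k * M ^ ((b : ℝ) + k - δ) * npowR (b + k) ((b : ℝ) + k - 1) := by
  intro t ht
  obtain ⟨ht0, htT⟩ := ht
  have ht0' : t ∈ Ioi (0:ℝ) := ht0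
  have htpos : (0:ℝ) < t ^ μ := Real.rpow_pos_of_pos ht0 μ
  -- rewrite goal in terms of iteratedDeriv
  rw [eqon_iterderiv u k ht0']
  -- the hypothesis in terms of Wfun
  have hyp' : ∀ j : ℕ, j ≤ k → t ^ μ * ‖Wfun u j t‖
      ≤ M ^ ((b : ℝ) + j - δ) * npowR (b + j) ((b : ℝ) + j - 1) := by
    intro j hj
    have := hyp j hj t ⟨ht0, htT⟩
    rwa [eqon_iterderiv _ j ht0'] at this
  -- step 1 : t^(μ+k) ‖u^(k)(t)‖ = t^μ ‖t^k • u^(k)(t)‖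
  have step1 : t ^ (μ + (k:ℝ)) * ‖iteratedDeriv k u t‖
      = t ^ μ * ‖(t^k : ℝ) • iteratedDeriv k u t‖ := by
    rw [norm_smul, Real.norm_eq_abs, abs_of_nonneg (pow_nonneg (le_of_lt ht0) k),
      Real.rpow_add ht0, Real.rpow_natCast]
    ring
  rw [step1, key_identity hu k t ht0']
  -- step 2 : bound the sum
  have step2 : t ^ μ * ‖∑ j ∈ Finset.range (k+1), cco k j • Wfun u j t‖
      ≤ ∑ j ∈ Finset.range (k+1), (Aco k j : ℝ) * (M ^ ((b : ℝ) + j - δ) * npowR (b + j) ((b : ℝ) + j - 1)) := by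
    calc t ^ μ * ‖∑ j ∈ Finset.range (k+1), cco k j • Wfun u j t‖
        ≤ t ^ μ * ∑ j ∈ Finset.range (k+1), ‖cco k j • Wfun u j t‖ :=
          mul_le_mul_of_nonneg_left (norm_sum_le _ _) (le_of_lt htpos)
      _ = ∑ j ∈ Finset.range (k+1), (Aco k j : ℝ) * (t ^ μ * ‖Wfun u j t‖) := by
          rw [Finset.mul_sum]
          refine Finset.sum_congr rfl (fun j _ => ?_)
          rw [norm_smul, Real.norm_eq_abs, abs_cco]
          ring
      _ ≤ ∑ j ∈ Finset.range (k+1), (Aco k j : ℝ) * (M ^ ((b : ℝ) + j - δ) * npowR (b + j) ((b : ℝ) + j - 1)) := by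
          refine Finset.sum_le_sum (fun j hj => ?_)
          exact mul_le_mul_of_nonneg_left
            (hyp' j (Nat.lt_succ_iff.mp (Finset.mem_range.mp hj))) (by positivity)
  refine le_trans step2 ?_
  -- step 3 : combinatorics
  have step3 : ∀ j ∈ Finset.range (k+1),
      (Aco k j : ℝ) * (M ^ ((b : ℝ) + j - δ) * npowR (b + j) ((b : ℝ) + j - 1))
        ≤ (k.choose j : ℝ) * M ^ (j:ℕ) * (M ^ ((b : ℝ) - δ) * npowR (b + k) ((b : ℝ) + k - 1)) := by
    intro j hj
    have hj' : j ≤ k := Nat.lt_succ_iff.mp (Finset.mem_range.mp hj)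
    have hMj : M ^ ((b : ℝ) + j - δ) = M ^ ((b:ℝ) - δ) * M ^ (j:ℕ) := by
      rw [← Real.rpow_natCast M j, ← Real.rpow_add hM]
      congr 1; ring
    calc (Aco k j : ℝ) * (M ^ ((b : ℝ) + j - δ) * npowR (b + j) ((b : ℝ) + j - 1))
        = M ^ ((b : ℝ) + j - δ) * ((Aco k j : ℝ) * npowR (b + j) ((b : ℝ) + j - 1)) := by ring
      _ ≤ M ^ ((b : ℝ) + j - δ) * ((k.choose j : ℝ) * npowR (b + k) ((b : ℝ) + k - 1)) := by
          refine mul_le_mul_of_nonneg_left (termwise b k j hk hj') ?_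
          positivity
      _ = (k.choose j : ℝ) * M ^ (j:ℕ) * (M ^ ((b : ℝ) - δ) * npowR (b + k) ((b : ℝ) + k - 1)) := by
          rw [hMj]; ring
  refine le_trans (Finset.sum_le_sum step3) ?_
  -- step 4 : sum the binomial series
  have step4 : ∑ j ∈ Finset.range (k+1), (k.choose j : ℝ) * M ^ (j:ℕ) = (M + 1)^k := by
    rw [add_pow]
    refine Finset.sum_congr rfl (fun j _ => ?_)
    rw [one_pow]; ring
  rw [← Finset.sum_mul, step4]
  -- step 5 : identify with the right-hand side
  have hM' : M ≠ 0 := ne_of_gt hM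
  have step5 : (1 + 1/M) ^ k * M ^ ((b : ℝ) + k - δ) = (M+1)^k * M ^ ((b:ℝ) - δ) := by
    have e1 : M ^ ((b : ℝ) + k - δ) = M ^ ((b:ℝ) - δ) * M ^ (k:ℕ) := by
      rw [← Real.rpow_natCast M k, ← Real.rpow_add hM]
      congr 1; ring
    have e2 : (1 + 1/M) ^ k * M ^ (k:ℕ) = (M+1)^k := by
      rw [← mul_pow]; congr 1; field_simp
    rw [e1, ← e2]; ring
  refine le_of_eq ?_
  rw [← mul_assoc, step5]
end
end
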